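/- Let u : ℝ × ℝ³ → ℝ³ and Ω : ℝ × ℝ³ → ℝ³ be smooth, and let φ : ℝ × ℝ³ → ℂ³ be a smooth complex 3-vector valued function. Suppose Ω satisfies the 3D Euler equation in vorticity form, ∂ₜΩ + (u·∇)Ω − (Ω·∇)u = 0, and φ satisfies ∂ₜφ + (u·∇)φ − (φ·∇)u = 0. Then for every complex constant λ, the function ψ := (Ω·∇)φ − (φ·∇)Ω − λφ also satisfies ∂ₜψ + (u·∇)ψ − (ψ·∇)u = 0. (This is the compatibility of the vector Lax pair L φ = (Ω·∇)φ − (φ·∇)Ω = λφ, ∂ₜφ + A φ = 0 with A φ = (u·∇)φ − (φ·∇)u, for the 3D Euler equation.) -/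

import Mathlib

/-- `(v·∇)g` for a real coefficient vector `v` and a real vector field `g` on ℝ³. -/
noncomputable def rGradR (v : Fin 3 → ℝ) (g : (Fin 3 → ℝ) → (Fin 3 → ℝ))
    (x : Fin 3 → ℝ) : Fin 3 → ℝ :=
  ∑ i : Fin 3, v i • fderiv ℝ g x (Pi.single i 1)

/-- `(v·∇)g` for a real coefficient vector `v` and a complex vector field `g` on ℝ³. -/
noncomputable def rGradC (v : Fin 3 → ℝ) (g : (Fin 3 → ℝ) → (Fin 3 → ℂ))
    (x : Fin 3 → ℝ) : Fin 3 → ℂ :=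
  ∑ i : Fin 3, v i • fderiv ℝ g x (Pi.single i 1)

/-- `(φ·∇)g` for a complex coefficient vector `φ` and a real vector field `g` on ℝ³
(the real partial derivatives are multiplied by the complex coefficients). -/
noncomputable def cGradR (v : Fin 3 → ℂ) (g : (Fin 3 → ℝ) → (Fin 3 → ℝ))
    (x : Fin 3 → ℝ) : Fin 3 → ℂ :=
  ∑ i : Fin 3, v i • (fun j => ((fderiv ℝ g x (Pi.single i 1)) j : ℂ))

open scoped BigOperators

namespace LaxAux

abbrev Q3 := ℝ × (Fin 3 → ℝ)
abbrev E3 := Fin 3 → ℝ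
abbrev C3 := Fin 3 → ℂ

/-- coordinatewise real→complex coercion as a CLM -/
noncomputable def cm3 : E3 →L[ℝ] C3 :=
  ContinuousLinearMap.pi fun i => Complex.ofRealCLM.comp (ContinuousLinearMap.proj i)

@[simp] lemma cm3_apply (w : E3) (j : Fin 3) : cm3 w j = (w j : ℂ) := rfl

lemma cm3_eq (w : E3) : (fun j => ((w j : ℝ) : ℂ)) = cm3 w := rfl

def eQ (i : Fin 3) : Q3 := (0, Pi.single i 1)
def e0Q : Q3 := (1, 0)

variable {V : Type*} [NormedAddCommGroup V] [NormedSpace ℝ V]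
variable {W : Type*} [NormedAddCommGroup W] [NormedSpace ℝ W]

lemma deriv_slice {F : Q3 → V} {t : ℝ} {x : E3}
    (hF : DifferentiableAt ℝ F (t, x)) :
    deriv (fun s => F (s, x)) t = fderiv ℝ F (t, x) e0Q := by
  have h1 : HasFDerivAt (fun s : ℝ => (s, x))
      ((ContinuousLinearMap.id ℝ ℝ).prod 0) t :=
    HasFDerivAt.prodMk (hasFDerivAt_id t) (hasFDerivAt_const x t)
  have h2 := (hF.hasFDerivAt.comp t h1).hasDerivAt
  have h3 : HasDerivAt (fun s => F (s, x)) (fderiv ℝ F (t, x) e0Q) t := by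
    simpa [e0Q, Function.comp_def] using h2
  exact h3.deriv

lemma fderiv_slice {F : Q3 → V} {t : ℝ} {x : E3}
    (hF : DifferentiableAt ℝ F (t, x)) (v : E3) :
    fderiv ℝ (fun y => F (t, y)) x v = fderiv ℝ F (t, x) (0, v) := by
  have h1 : HasFDerivAt (fun y : E3 => (t, y))
      ((0 : E3 →L[ℝ] ℝ).prod (ContinuousLinearMap.id ℝ E3)) x :=
    HasFDerivAt.prodMk (hasFDerivAt_const t x) (hasFDerivAt_id x)
  have h2 := (hF.hasFDerivAt.comp x h1).fderiv
  rw [show (fun y => F (t, y)) = F ∘ Prod.mk t from rfl, h2]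
  rfl

end LaxAux

open scoped BigOperators

namespace LaxAux2

variable {Q : Type*} [NormedAddCommGroup Q] [NormedSpace ℝ Q]
variable {V : Type*} [NormedAddCommGroup V] [NormedSpace ℝ V]
variable {W : Type*} [NormedAddCommGroup W] [NormedSpace ℝ W]

lemma contDiff_fderiv_apply {F : Q → V} (hF : ContDiff ℝ (⊤ : ℕ∞) F) (v : Q) :
    ContDiff ℝ (⊤ : ℕ∞) (fun q => fderiv ℝ F q v) :=
  (hF.fderiv_right (by simp)).clm_apply contDiff_const

lemma fderiv_fderiv_symm {F : Q → V} (hF : ContDiff ℝ (⊤ : ℕ∞) F) (q v w : Q) :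
    fderiv ℝ (fun q' => fderiv ℝ F q' v) q w
      = fderiv ℝ (fun q' => fderiv ℝ F q' w) q v := by
  have hd : Differentiable ℝ (fderiv ℝ F) :=
    (hF.fderiv_right (m := (⊤ : ℕ∞)) (by simp)).differentiable (by simp)
  have key : ∀ a : Q, fderiv ℝ (fun q' => fderiv ℝ F q' a) q
      = (fderiv ℝ (fderiv ℝ F) q).flip a := by
    intro a
    rw [fderiv_clm_apply (hd q) (differentiableAt_const a)]
    simp
  rw [key v, key w]
  exact second_derivative_symmetric (f := F)
    (fun y => (hF.differentiable (by simp) y).hasFDerivAt)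
    ((hd q).hasFDerivAt) w v

lemma fderiv_sub_apply {f g : Q → V} {q w : Q}
    (hf : DifferentiableAt ℝ f q) (hg : DifferentiableAt ℝ g q) :
    fderiv ℝ (fun q' => f q' - g q') q w = fderiv ℝ f q w - fderiv ℝ g q w := by
  rw [fderiv_fun_sub hf hg]; rfl

lemma fderiv_sum_apply' {ι : Type*} {s : Finset ι} {f : ι → Q → V} {q w : Q}
    (hf : ∀ i ∈ s, DifferentiableAt ℝ (f i) q) :
    fderiv ℝ (fun q' => ∑ i ∈ s, f i q') q w = ∑ i ∈ s, fderiv ℝ (f i) q w := by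
  rw [fderiv_fun_sum hf]; simp

lemma fderiv_smul_apply {𝕜' : Type*} [NontriviallyNormedField 𝕜'] [NormedAlgebra ℝ 𝕜']
    [NormedSpace 𝕜' V] [IsScalarTower ℝ 𝕜' V]
    {c : Q → 𝕜'} {f : Q → V} {q w : Q}
    (hc : DifferentiableAt ℝ c q) (hf : DifferentiableAt ℝ f q) :
    fderiv ℝ (fun q' => c q' • f q') q w
      = fderiv ℝ c q w • f q + c q • fderiv ℝ f q w := by
  rw [fderiv_fun_smul hc hf]
  simp [add_comm]

lemma fderiv_const_smul_apply {c : ℂ} {f : Q → Fin 3 → ℂ} {q w : Q}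
    (hf : DifferentiableAt ℝ f q) :
    fderiv ℝ (fun q' => c • f q') q w = c • fderiv ℝ f q w := by
  rw [fderiv_fun_const_smul hf c]; rfl

lemma fderiv_pi_apply {ι : Type*} [Fintype ι] {A : Type*} [NormedAddCommGroup A]
    [NormedSpace ℝ A] {f : Q → ι → A} {q w : Q}
    (hf : DifferentiableAt ℝ f q) (i : ι) :
    fderiv ℝ (fun q' => f q' i) q w = fderiv ℝ f q w i := by
  have := ((ContinuousLinearMap.proj (R := ℝ) (φ := fun _ : ι => A) i).hasFDerivAt.comp
    q hf.hasFDerivAt).fderiv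
  rw [show (fun q' => f q' i) = (ContinuousLinearMap.proj (R := ℝ) (φ := fun _ : ι => A) i)
    ∘ f from rfl, this]
  rfl

lemma fderiv_clm_comp_apply {L : V →L[ℝ] W} {f : Q → V} {q w : Q}
    (hf : DifferentiableAt ℝ f q) :
    fderiv ℝ (fun q' => L (f q')) q w = L (fderiv ℝ f q w) := by
  have := (L.hasFDerivAt.comp q hf.hasFDerivAt).fderiv
  rw [show (fun q' => L (f q')) = L ∘ f from rfl, this]
  rfl

end LaxAux2

open LaxAux LaxAux2

noncomputable def laxPsi (lam : ℂ) (O : Q3 → E3) (P : Q3 → C3) : Q3 → C3 := fun q =>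
  (∑ i : Fin 3, O q i • fderiv ℝ P q (eQ i))
  - (∑ i : Fin 3, P q i • cm3 (fderiv ℝ O q (eQ i)))
  - lam • P q

lemma lax_key (lam : ℂ) (U O : Q3 → E3) (P : Q3 → C3)
    (hU : ContDiff ℝ (⊤ : ℕ∞) U) (hO : ContDiff ℝ (⊤ : ℕ∞) O) (hP : ContDiff ℝ (⊤ : ℕ∞) P)
    (hO' : ∀ q, fderiv ℝ O q e0Q
      = (∑ k : Fin 3, O q k • fderiv ℝ U q (eQ k))
        - ∑ k : Fin 3, U q k • fderiv ℝ O q (eQ k))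
    (hP' : ∀ q, fderiv ℝ P q e0Q
      = (∑ k : Fin 3, P q k • cm3 (fderiv ℝ U q (eQ k)))
        - ∑ k : Fin 3, U q k • fderiv ℝ P q (eQ k))
    (q : Q3) :
    fderiv ℝ (laxPsi lam O P) q e0Q
      + ∑ k : Fin 3, U q k • fderiv ℝ (laxPsi lam O P) q (eQ k)
      - ∑ k : Fin 3, laxPsi lam O P q k • cm3 (fderiv ℝ U q (eQ k)) = 0 := by
  -- basic differentiability facts
  have hUd : Differentiable ℝ U := hU.differentiable (by simp)
  have hOd : Differentiable ℝ O := hO.differentiable (by simp)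
  have hPd : Differentiable ℝ P := hP.differentiable (by simp)
  have hDU : ∀ v, ContDiff ℝ (⊤ : ℕ∞) (fun q' => fderiv ℝ U q' v) := contDiff_fderiv_apply hU
  have hDO : ∀ v, ContDiff ℝ (⊤ : ℕ∞) (fun q' => fderiv ℝ O q' v) := contDiff_fderiv_apply hO
  have hDP : ∀ v, ContDiff ℝ (⊤ : ℕ∞) (fun q' => fderiv ℝ P q' v) := contDiff_fderiv_apply hP
  have hUi : ∀ i, ContDiff ℝ (⊤ : ℕ∞) (fun q' => U q' i) := fun i => contDiff_pi.mp hU i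
  have hOi : ∀ i, ContDiff ℝ (⊤ : ℕ∞) (fun q' => O q' i) := fun i => contDiff_pi.mp hO i
  have hPi : ∀ i, ContDiff ℝ (⊤ : ℕ∞) (fun q' => P q' i) := fun i => contDiff_pi.mp hP i
  -- smoothness of the individual summands of laxPsi
  have hT1 : ∀ i : Fin 3, ContDiff ℝ (⊤ : ℕ∞) (fun q' => O q' i • fderiv ℝ P q' (eQ i)) :=
    fun i => (hOi i).smul (hDP (eQ i))
  have hcmDO : ∀ v, ContDiff ℝ (⊤ : ℕ∞) (fun q' => cm3 (fderiv ℝ O q' v)) :=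
    fun v => cm3.contDiff.comp (hDO v)
  have hcmDU : ∀ v, ContDiff ℝ (⊤ : ℕ∞) (fun q' => cm3 (fderiv ℝ U q' v)) :=
    fun v => cm3.contDiff.comp (hDU v)
  have hT2 : ∀ i : Fin 3, ContDiff ℝ (⊤ : ℕ∞) (fun q' => P q' i • cm3 (fderiv ℝ O q' (eQ i))) :=
    fun i => ((ContinuousLinearMap.lsmul ℝ ℂ : ℂ →L[ℝ] C3 →L[ℝ] C3).contDiff.comp
      (hPi i)).clm_apply (hcmDO (eQ i))
  have hT2U : ∀ k : Fin 3, ContDiff ℝ (⊤ : ℕ∞) (fun q' => P q' k • cm3 (fderiv ℝ U q' (eQ k))) :=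
    fun k => ((ContinuousLinearMap.lsmul ℝ ℂ : ℂ →L[ℝ] C3 →L[ℝ] C3).contDiff.comp
      (hPi k)).clm_apply (hcmDU (eQ k))
  have hS1 : ContDiff ℝ (⊤ : ℕ∞) (fun q' => ∑ i : Fin 3, O q' i • fderiv ℝ P q' (eQ i)) :=
    ContDiff.sum fun i _ => hT1 i
  have hS2 : ContDiff ℝ (⊤ : ℕ∞) (fun q' => ∑ i : Fin 3, P q' i • cm3 (fderiv ℝ O q' (eQ i))) :=
    ContDiff.sum fun i _ => hT2 i
  -- derivative of laxPsi in an arbitrary direction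
  have e1 : ∀ (i : Fin 3) (w : Q3), fderiv ℝ (fun q' => O q' i • fderiv ℝ P q' (eQ i)) q w
      = fderiv ℝ O q w i • fderiv ℝ P q (eQ i)
        + O q i • fderiv ℝ (fun q' => fderiv ℝ P q' (eQ i)) q w := by
    intro i w
    rw [fderiv_smul_apply ((hOi i).differentiable (by simp) q)
      ((hDP (eQ i)).differentiable (by simp) q), fderiv_pi_apply (hOd q) i]
  have e2 : ∀ (i : Fin 3) (w : Q3),
      fderiv ℝ (fun q' => P q' i • cm3 (fderiv ℝ O q' (eQ i))) q w
      = fderiv ℝ P q w i • cm3 (fderiv ℝ O q (eQ i))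
        + P q i • cm3 (fderiv ℝ (fun q' => fderiv ℝ O q' (eQ i)) q w) := by
    intro i w
    rw [fderiv_smul_apply ((hPi i).differentiable (by simp) q)
      ((hcmDO (eQ i)).differentiable (by simp) q),
      fderiv_pi_apply (hPd q) i,
      fderiv_clm_comp_apply ((hDO (eQ i)).differentiable (by simp) q)]
  have hDPsi : ∀ w : Q3, fderiv ℝ (laxPsi lam O P) q w
      = (∑ i : Fin 3, (fderiv ℝ O q w i • fderiv ℝ P q (eQ i)
          + O q i • fderiv ℝ (fun q' => fderiv ℝ P q' (eQ i)) q w))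
        - (∑ i : Fin 3, (fderiv ℝ P q w i • cm3 (fderiv ℝ O q (eQ i))
          + P q i • cm3 (fderiv ℝ (fun q' => fderiv ℝ O q' (eQ i)) q w)))
        - lam • fderiv ℝ P q w := by
    intro w
    show fderiv ℝ (fun q' => (∑ i : Fin 3, O q' i • fderiv ℝ P q' (eQ i))
      - (∑ i : Fin 3, P q' i • cm3 (fderiv ℝ O q' (eQ i))) - lam • P q') q w = _
    rw [fderiv_sub_apply ((hS1.sub hS2).differentiable (by simp) q)
        ((hP.const_smul lam).differentiable (by simp) q),
      fderiv_sub_apply (hS1.differentiable (by simp) q) (hS2.differentiable (by simp) q),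
      fderiv_sum_apply' (fun i _ => (hT1 i).differentiable (by simp) q),
      fderiv_sum_apply' (fun i _ => (hT2 i).differentiable (by simp) q),
      fderiv_const_smul_apply (hPd q)]
    simp only [e1, e2]
  -- derivative of the time-derivative equations in spatial directions
  have eU : ∀ (k : Fin 3) (v : Q3), fderiv ℝ (fun q' => U q' k • fderiv ℝ O q' (eQ k)) q v
      = fderiv ℝ U q v k • fderiv ℝ O q (eQ k)
        + U q k • fderiv ℝ (fun q' => fderiv ℝ O q' (eQ k)) q v := by
    intro k v
    rw [fderiv_smul_apply ((hUi k).differentiable (by simp) q)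
      ((hDO (eQ k)).differentiable (by simp) q), fderiv_pi_apply (hUd q) k]
  have eU2 : ∀ (k : Fin 3) (v : Q3), fderiv ℝ (fun q' => O q' k • fderiv ℝ U q' (eQ k)) q v
      = fderiv ℝ O q v k • fderiv ℝ U q (eQ k)
        + O q k • fderiv ℝ (fun q' => fderiv ℝ U q' (eQ k)) q v := by
    intro k v
    rw [fderiv_smul_apply ((hOi k).differentiable (by simp) q)
      ((hDU (eQ k)).differentiable (by simp) q), fderiv_pi_apply (hOd q) k]
  have eU3 : ∀ (k : Fin 3) (v : Q3), fderiv ℝ (fun q' => U q' k • fderiv ℝ P q' (eQ k)) q v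
      = fderiv ℝ U q v k • fderiv ℝ P q (eQ k)
        + U q k • fderiv ℝ (fun q' => fderiv ℝ P q' (eQ k)) q v := by
    intro k v
    rw [fderiv_smul_apply ((hUi k).differentiable (by simp) q)
      ((hDP (eQ k)).differentiable (by simp) q), fderiv_pi_apply (hUd q) k]
  have eU4 : ∀ (k : Fin 3) (v : Q3),
      fderiv ℝ (fun q' => P q' k • cm3 (fderiv ℝ U q' (eQ k))) q v
      = fderiv ℝ P q v k • cm3 (fderiv ℝ U q (eQ k))
        + P q k • cm3 (fderiv ℝ (fun q' => fderiv ℝ U q' (eQ k)) q v) := by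
    intro k v
    rw [fderiv_smul_apply ((hPi k).differentiable (by simp) q)
      ((hcmDU (eQ k)).differentiable (by simp) q),
      fderiv_pi_apply (hPd q) k,
      fderiv_clm_comp_apply ((hDU (eQ k)).differentiable (by simp) q)]
  have hmixO : ∀ i : Fin 3, fderiv ℝ (fun q' => fderiv ℝ O q' (eQ i)) q e0Q
      = (∑ k : Fin 3, (fderiv ℝ O q (eQ i) k • fderiv ℝ U q (eQ k)
          + O q k • fderiv ℝ (fun q' => fderiv ℝ U q' (eQ k)) q (eQ i)))
        - ∑ k : Fin 3, (fderiv ℝ U q (eQ i) k • fderiv ℝ O q (eQ k)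
          + U q k • fderiv ℝ (fun q' => fderiv ℝ O q' (eQ k)) q (eQ i)) := by
    intro i
    rw [fderiv_fderiv_symm hO q (eQ i) e0Q,
      show (fun q' => fderiv ℝ O q' e0Q)
        = (fun q' => (∑ k : Fin 3, O q' k • fderiv ℝ U q' (eQ k))
            - ∑ k : Fin 3, U q' k • fderiv ℝ O q' (eQ k)) from funext hO',
      fderiv_sub_apply (f := fun q' => ∑ k : Fin 3, O q' k • fderiv ℝ U q' (eQ k))
          (g := fun q' => ∑ k : Fin 3, U q' k • fderiv ℝ O q' (eQ k))
          ((ContDiff.sum fun k _ => (hOi k).smul (hDU (eQ k))).differentiable (by simp) q)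
        ((ContDiff.sum fun k _ => (hUi k).smul (hDO (eQ k))).differentiable (by simp) q),
      fderiv_sum_apply' (f := fun k q' => O q' k • fderiv ℝ U q' (eQ k))
        (fun k _ => ((hOi k).smul (hDU (eQ k))).differentiable (by simp) q),
      fderiv_sum_apply' (f := fun k q' => U q' k • fderiv ℝ O q' (eQ k))
        (fun k _ => ((hUi k).smul (hDO (eQ k))).differentiable (by simp) q)]
    simp only [eU, eU2]
  have hmixP : ∀ i : Fin 3, fderiv ℝ (fun q' => fderiv ℝ P q' (eQ i)) q e0Q
      = (∑ k : Fin 3, (fderiv ℝ P q (eQ i) k • cm3 (fderiv ℝ U q (eQ k))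
          + P q k • cm3 (fderiv ℝ (fun q' => fderiv ℝ U q' (eQ k)) q (eQ i))))
        - ∑ k : Fin 3, (fderiv ℝ U q (eQ i) k • fderiv ℝ P q (eQ k)
          + U q k • fderiv ℝ (fun q' => fderiv ℝ P q' (eQ k)) q (eQ i)) := by
    intro i
    rw [fderiv_fderiv_symm hP q (eQ i) e0Q,
      show (fun q' => fderiv ℝ P q' e0Q)
        = (fun q' => (∑ k : Fin 3, P q' k • cm3 (fderiv ℝ U q' (eQ k)))
            - ∑ k : Fin 3, U q' k • fderiv ℝ P q' (eQ k)) from funext hP',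
      fderiv_sub_apply
        (g := fun q' => ∑ k : Fin 3, U q' k • fderiv ℝ P q' (eQ k))
        ((ContDiff.sum fun k _ => hT2U k).differentiable (by simp) q)
        ((ContDiff.sum fun k _ => (hUi k).smul (hDP (eQ k))).differentiable (by simp) q),
      fderiv_sum_apply' (fun k _ => (hT2U k).differentiable (by simp) q),
      fderiv_sum_apply' (f := fun k q' => U q' k • fderiv ℝ P q' (eQ k))
        (fun k _ => ((hUi k).smul (hDP (eQ k))).differentiable (by simp) q)]
    simp only [eU3, eU4]
  -- assemble
  simp only [hDPsi, hmixO, hmixP, hO' q, hP' q, laxPsi]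
  funext j
  simp only [Pi.add_apply, Pi.sub_apply, Pi.smul_apply, Finset.sum_apply, cm3_apply,
    Pi.zero_apply, smul_eq_mul, Complex.real_smul, Fin.sum_univ_three]
  rw [fderiv_fderiv_symm hO q (eQ 1) (eQ 0), fderiv_fderiv_symm hO q (eQ 2) (eQ 0),
    fderiv_fderiv_symm hO q (eQ 2) (eQ 1), fderiv_fderiv_symm hU q (eQ 1) (eQ 0),
    fderiv_fderiv_symm hU q (eQ 2) (eQ 0), fderiv_fderiv_symm hU q (eQ 2) (eQ 1),
    fderiv_fderiv_symm hP q (eQ 1) (eQ 0), fderiv_fderiv_symm hP q (eQ 2) (eQ 0),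
    fderiv_fderiv_symm hP q (eQ 2) (eQ 1)]
  push_cast
  ring

lemma laxPsi_contDiff (lam : ℂ) {O : Q3 → E3} {P : Q3 → C3}
    (hO : ContDiff ℝ (⊤ : ℕ∞) O) (hP : ContDiff ℝ (⊤ : ℕ∞) P) :
    ContDiff ℝ (⊤ : ℕ∞) (laxPsi lam O P) := by
  have hDO : ∀ v, ContDiff ℝ (⊤ : ℕ∞) (fun q' => fderiv ℝ O q' v) := contDiff_fderiv_apply hO
  have hDP : ∀ v, ContDiff ℝ (⊤ : ℕ∞) (fun q' => fderiv ℝ P q' v) := contDiff_fderiv_apply hP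
  have hcmDO : ∀ v, ContDiff ℝ (⊤ : ℕ∞) (fun q' => cm3 (fderiv ℝ O q' v)) :=
    fun v => cm3.contDiff.comp (hDO v)
  exact ((ContDiff.sum fun i _ => (contDiff_pi.mp hO i).smul (hDP (eQ i))).sub
    (ContDiff.sum fun i _ =>
      ((ContinuousLinearMap.lsmul ℝ ℂ : ℂ →L[ℝ] C3 →L[ℝ] C3).contDiff.comp
        (contDiff_pi.mp hP i)).clm_apply (hcmDO (eQ i)))).sub (hP.const_smul lam)

/-- Compatibility of the vector Lax pair of the 3D Euler equation: if
`∂ₜΩ + (u·∇)Ω − (Ω·∇)u = 0` and `∂ₜφ + (u·∇)φ − (φ·∇)u = 0`, then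
`ψ := (Ω·∇)φ − (φ·∇)Ω − λφ` satisfies `∂ₜψ + (u·∇)ψ − (ψ·∇)u = 0`. -/
theorem vector_lax_pair_3d_euler
    (u Ω : ℝ → (Fin 3 → ℝ) → (Fin 3 → ℝ))
    (φ : ℝ → (Fin 3 → ℝ) → (Fin 3 → ℂ))
    (hu : ContDiff ℝ (⊤ : ℕ∞) (fun q : ℝ × (Fin 3 → ℝ) => u q.1 q.2))
    (hΩ : ContDiff ℝ (⊤ : ℕ∞) (fun q : ℝ × (Fin 3 → ℝ) => Ω q.1 q.2))
    (hφ : ContDiff ℝ (⊤ : ℕ∞) (fun q : ℝ × (Fin 3 → ℝ) => φ q.1 q.2))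
    (heuler : ∀ (t : ℝ) (x : Fin 3 → ℝ),
      deriv (fun s => Ω s x) t + rGradR (u t x) (Ω t) x - rGradR (Ω t x) (u t) x = 0)
    (haux : ∀ (t : ℝ) (x : Fin 3 → ℝ),
      deriv (fun s => φ s x) t + rGradC (u t x) (φ t) x - cGradR (φ t x) (u t) x = 0)
    (lam : ℂ) :
    ∀ (t : ℝ) (x : Fin 3 → ℝ),
      deriv (fun s =>
          rGradC (Ω s x) (φ s) x - cGradR (φ s x) (Ω s) x - lam • φ s x) t
        + rGradC (u t x)
            (fun x' => rGradC (Ω t x') (φ t) x' - cGradR (φ t x') (Ω t) x' - lam • φ t x') x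
        - cGradR
            (rGradC (Ω t x) (φ t) x - cGradR (φ t x) (Ω t) x - lam • φ t x)
            (u t) x = 0 := by
  set U : Q3 → E3 := fun q => u q.1 q.2 with hUdef
  set O : Q3 → E3 := fun q => Ω q.1 q.2 with hOdef
  set P : Q3 → C3 := fun q => φ q.1 q.2 with hPdef
  -- slicing lemmas
  have hsliceU : ∀ (t : ℝ) (x : E3) (k : Fin 3),
      fderiv ℝ (u t) x (Pi.single k 1) = fderiv ℝ U (t, x) (eQ k) :=
    fun t x k => fderiv_slice ((hu.differentiable (by simp)) (t, x)) (Pi.single k 1)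
  have hsliceO : ∀ (t : ℝ) (x : E3) (k : Fin 3),
      fderiv ℝ (Ω t) x (Pi.single k 1) = fderiv ℝ O (t, x) (eQ k) :=
    fun t x k => fderiv_slice ((hΩ.differentiable (by simp)) (t, x)) (Pi.single k 1)
  have hsliceP : ∀ (t : ℝ) (x : E3) (k : Fin 3),
      fderiv ℝ (φ t) x (Pi.single k 1) = fderiv ℝ P (t, x) (eQ k) :=
    fun t x k => fderiv_slice ((hφ.differentiable (by simp)) (t, x)) (Pi.single k 1)
  have hderivO : ∀ (t : ℝ) (x : E3),
      deriv (fun s => Ω s x) t = fderiv ℝ O (t, x) e0Q :=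
    fun t x => deriv_slice ((hΩ.differentiable (by simp)) (t, x))
  have hderivP : ∀ (t : ℝ) (x : E3),
      deriv (fun s => φ s x) t = fderiv ℝ P (t, x) e0Q :=
    fun t x => deriv_slice ((hφ.differentiable (by simp)) (t, x))
  -- evolution equations in fderiv form
  have hO' : ∀ q : Q3, fderiv ℝ O q e0Q
      = (∑ k : Fin 3, O q k • fderiv ℝ U q (eQ k))
        - ∑ k : Fin 3, U q k • fderiv ℝ O q (eQ k) := by
    rintro ⟨t, x⟩
    have h := heuler t x
    simp only [rGradR, hsliceO, hsliceU, hderivO] at h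
    exact eq_sub_of_add_eq (sub_eq_zero.mp h)
  have hP' : ∀ q : Q3, fderiv ℝ P q e0Q
      = (∑ k : Fin 3, P q k • cm3 (fderiv ℝ U q (eQ k)))
        - ∑ k : Fin 3, U q k • fderiv ℝ P q (eQ k) := by
    rintro ⟨t, x⟩
    have h := haux t x
    simp only [rGradC, cGradR, cm3_eq, hsliceP, hsliceU, hderivP] at h
    exact eq_sub_of_add_eq (sub_eq_zero.mp h)
  -- Psi identification
  have hPsiEq : ∀ (s : ℝ) (y : E3),
      rGradC (Ω s y) (φ s) y - cGradR (φ s y) (Ω s) y - lam • φ s y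
        = laxPsi lam O P (s, y) := by
    intro s y
    simp only [rGradC, cGradR, laxPsi, cm3_eq, hsliceP, hsliceO]
    rfl
  have hPsiSmooth : ContDiff ℝ (⊤ : ℕ∞) (laxPsi lam O P) := laxPsi_contDiff lam hΩ hφ
  intro t x
  rw [show (fun s => rGradC (Ω s x) (φ s) x - cGradR (φ s x) (Ω s) x - lam • φ s x)
      = (fun s => laxPsi lam O P (s, x)) from funext fun s => hPsiEq s x,
    show (fun x' => rGradC (Ω t x') (φ t) x' - cGradR (φ t x') (Ω t) x' - lam • φ t x')
      = (fun x' => laxPsi lam O P (t, x')) from funext fun x' => hPsiEq t x',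
    hPsiEq t x]
  have hderivPsi : deriv (fun s => laxPsi lam O P (s, x)) t
      = fderiv ℝ (laxPsi lam O P) (t, x) e0Q :=
    deriv_slice ((hPsiSmooth.differentiable (by simp)) (t, x))
  have hslicePsi : ∀ k : Fin 3,
      fderiv ℝ (fun x' => laxPsi lam O P (t, x')) x (Pi.single k 1)
        = fderiv ℝ (laxPsi lam O P) (t, x) (eQ k) :=
    fun k => fderiv_slice ((hPsiSmooth.differentiable (by simp)) (t, x)) (Pi.single k 1)
  simp only [rGradC, cGradR, cm3_eq, hderivPsi, hslicePsi, hsliceU]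
  exact lax_key lam U O P hu hΩ hφ hO' hP' (t, x)
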